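/- arXiv:2410.20113 — 4 statements merged into one kernel-verified Lean document; each statement's English description precedes it below -/
import Mathlib

section
/- For every real α with 0 < α < 1 there exists a constant C'_α > 0 such that g_α(x) ≥ C'_α · (√x - 1)^2 for all x ≥ 0, where g_α(x) = x - x^α/α + 1/α - 1. -/
/-! Substituting `t = √x`, the weighted AM–GM inequality `t ^ α ≤ α t + (1 - α)` bounds
`x ^ α = (t ^ α) ^ 2` by `(α t + 1 - α) ^ 2`, and with this bound `g_α(t ^ 2)` becomes exactly
`(1 - α) (t - 1) ^ 2`. -/

namespace Real

theorem rpow_le_mul_add_one_sub {t α : ℝ} (ht : 0 ≤ t) (hα0 : 0 ≤ α) (hα1 : α ≤ 1) :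
    t ^ α ≤ α * t + (1 - α) := by
  have h := rpow_one_add_le_one_add_mul_self (s := t - 1) (by linarith) hα0 hα1
  rw [add_sub_cancel] at h
  linarith

theorem one_sub_mul_sq_sub_one_le {t α : ℝ} (ht : 0 ≤ t) (hα0 : 0 < α) (hα1 : α ≤ 1) :
    (1 - α) * (t - 1) ^ 2 ≤ t ^ 2 - (t ^ α) ^ 2 / α + 1 / α - 1 := by
  have hsq : (t ^ α) ^ 2 ≤ (α * t + (1 - α)) ^ 2 :=
    pow_le_pow_left₀ (rpow_nonneg ht α) (rpow_le_mul_add_one_sub ht hα0.le hα1) 2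
  calc (1 - α) * (t - 1) ^ 2 = t ^ 2 - (α * t + (1 - α)) ^ 2 / α + 1 / α - 1 := by
        field_simp
        ring
    _ ≤ t ^ 2 - (t ^ α) ^ 2 / α + 1 / α - 1 := by gcongr

theorem sqrt_rpow_sq {x : ℝ} (hx : 0 ≤ x) (α : ℝ) : (√x ^ α) ^ 2 = x ^ α := by
  rw [sq, ← mul_rpow (sqrt_nonneg x) (sqrt_nonneg x), mul_self_sqrt hx]

end Real

theorem galpha_quadratic_lower_bound (α : ℝ) (hα0 : 0 < α) (hα1 : α < 1) :
    ∃ C : ℝ, 0 < C ∧ ∀ x : ℝ, 0 ≤ x →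
      C * (Real.sqrt x - 1) ^ 2 ≤ x - x ^ α / α + 1 / α - 1 := by
  refine ⟨1 - α, sub_pos.2 hα1, fun x hx => ?_⟩
  have h := Real.one_sub_mul_sq_sub_one_le (Real.sqrt_nonneg x) hα0 hα1.le
  rwa [Real.sqrt_rpow_sq hx, Real.sq_sqrt hx] at h
end

section
/- Let 1 < p ≤ 2. For all real numbers a, b ≥ 0, setting δ = a^{p/2} - b^{p/2} and X = a - b - (2/p) b^{1-p/2} δ, one has 0 ≤ X ≤ |δ|^{2/p}. (For p = 2 interpret b^{1-p/2} = 1.) -/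
/-!
With `x = a ^ (p / 2)`, `y = b ^ (p / 2)` and `r = 2 / p ∈ [1, 2]`, the quantity `X` is the
remainder `x ^ r - y ^ r - r y ^ (r - 1) (x - y)` of the tangent-line approximation of
`t ↦ t ^ r` at `y`. It is nonnegative by convexity of `t ↦ t ^ r`. For the upper bound,
`x ↦ |x - y| ^ r` minus that remainder vanishes at `x = y`, and its derivative changes sign there
from `-` to `+` because `t ↦ t ^ (r - 1)` is subadditive, `r - 1` lying in `[0, 1]`.
-/

open Set

theorem isMinOn_Ici_of_hasDerivAt_nonpos_nonneg {f f' : ℝ → ℝ} {a y : ℝ} (hay : a ≤ y)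
    (hf : ContinuousOn f (Ici a)) (hf' : ∀ t, a < t → t ≠ y → HasDerivAt f (f' t) t)
    (hleft : ∀ t, a < t → t < y → f' t ≤ 0) (hright : ∀ t, y < t → 0 ≤ f' t) :
    IsMinOn f (Ici a) y := by
  intro x (hax : a ≤ x)
  rcases le_total x y with hxy | hyx
  · have hanti : AntitoneOn f (Icc a y) := by
      refine antitoneOn_of_hasDerivWithinAt_nonpos (f' := f') (convex_Icc a y)
        (hf.mono Icc_subset_Ici_self) (fun t ht ↦ ?_) (fun t ht ↦ ?_) <;>
        rw [interior_Icc] at ht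
      · exact (hf' t ht.1 ht.2.ne).hasDerivWithinAt
      · exact hleft t ht.1 ht.2
    exact hanti ⟨hax, hxy⟩ ⟨hay, le_rfl⟩ hxy
  · have hmono : MonotoneOn f (Ici y) := by
      refine monotoneOn_of_hasDerivWithinAt_nonneg (f' := f') (convex_Ici y)
        (hf.mono (Ici_subset_Ici.2 hay)) (fun t ht ↦ ?_) (fun t ht ↦ ?_) <;>
        rw [interior_Ici] at ht
      · exact (hf' t (hay.trans_lt ht) ht.ne').hasDerivWithinAt
      · exact hright t ht
    exact hmono (mem_Ici.2 le_rfl) hyx hyx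

section TangentRemainder

variable {r x y : ℝ}

theorem rpow_tangent_le_rpow (hr : 1 ≤ r) (hx : 0 ≤ x) (hy : 0 ≤ y) :
    y ^ r + r * y ^ (r - 1) * (x - y) ≤ x ^ r := by
  let f : ℝ → ℝ := fun t ↦ t ^ r - (y ^ r + r * y ^ (r - 1) * (t - y))
  have hmin : IsMinOn f (Ici 0) y := by
    refine isMinOn_Ici_of_hasDerivAt_nonpos_nonneg
      (f' := fun t ↦ r * t ^ (r - 1) - r * y ^ (r - 1)) hy (by fun_prop (disch := positivity))
      (fun t _ _ ↦ ?_) (fun t ht₀ hty ↦ ?_) (fun t hyt ↦ ?_)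
    · exact ((Real.hasDerivAt_rpow_const (Or.inr hr)).sub (HasDerivAt.const_add (y ^ r)
        (((hasDerivAt_id t).sub_const y).const_mul (r * y ^ (r - 1))))).congr_deriv (by ring)
    · have hmono := Real.rpow_le_rpow ht₀.le hty.le (sub_nonneg.2 hr)
      nlinarith
    · have hmono := Real.rpow_le_rpow hy hyt.le (sub_nonneg.2 hr)
      nlinarith
  simpa [f] using hmin hx

theorem rpow_sub_tangent_le_abs_sub_rpow (hr₁ : 1 ≤ r) (hr₂ : r ≤ 2) (hx : 0 ≤ x)
    (hy : 0 ≤ y) :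
    x ^ r - y ^ r - r * y ^ (r - 1) * (x - y) ≤ |x - y| ^ r := by
  let f : ℝ → ℝ := fun t ↦ |t - y| ^ r - (t ^ r - y ^ r - r * y ^ (r - 1) * (t - y))
  have hsubadd {u v : ℝ} (hu : 0 ≤ u) (hv : 0 ≤ v) :
      (u + v) ^ (r - 1) ≤ u ^ (r - 1) + v ^ (r - 1) :=
    Real.rpow_add_le_add_rpow hu hv (by linarith) (by linarith)
  have hmin : IsMinOn f (Ici 0) y := by
    refine isMinOn_Ici_of_hasDerivAt_nonpos_nonneg
      (f' := fun t ↦ SignType.sign (t - y) * r * |t - y| ^ (r - 1) -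
        (r * t ^ (r - 1) - r * y ^ (r - 1)))
      hy (by fun_prop (disch := positivity)) (fun t _ hty ↦ ?_) (fun t ht₀ hty ↦ ?_)
      (fun t hyt ↦ ?_)
    · have habs := ((hasDerivAt_abs (sub_ne_zero.2 hty)).comp t
        ((hasDerivAt_id t).sub_const y)).rpow_const (p := r) (Or.inr hr₁)
      exact (habs.sub (((Real.hasDerivAt_rpow_const (Or.inr hr₁)).sub_const (y ^ r)).sub
        (((hasDerivAt_id t).sub_const y).const_mul (r * y ^ (r - 1))))).congr_deriv
        (by simp only [Function.comp_apply, id]; ring)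
    · have hsub := hsubadd (sub_nonneg.2 hty.le) ht₀.le
      rw [sub_add_cancel] at hsub
      simp only [sign_neg (sub_neg.2 hty), abs_sub_comm t y, abs_of_pos (sub_pos.2 hty),
        SignType.coe_neg_one]
      nlinarith
    · have hsub := hsubadd (sub_nonneg.2 hyt.le) hy
      rw [sub_add_cancel] at hsub
      simp only [sign_pos (sub_pos.2 hyt), abs_of_pos (sub_pos.2 hyt),
        SignType.coe_one]
      nlinarith
  have hzero : (0 : ℝ) ^ r = 0 := Real.zero_rpow (by linarith)
  simpa [f, hzero] using hmin hx

end TangentRemainder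

theorem X_bounds (p : ℝ) (hp1 : 1 < p) (hp2 : p ≤ 2) (a b : ℝ) (ha : 0 ≤ a) (hb : 0 ≤ b) :
    0 ≤ a - b - (2 / p) * b ^ (1 - p / 2) * (a ^ (p / 2) - b ^ (p / 2)) ∧
      a - b - (2 / p) * b ^ (1 - p / 2) * (a ^ (p / 2) - b ^ (p / 2)) ≤
        |a ^ (p / 2) - b ^ (p / 2)| ^ (2 / p) := by
  have hp : 0 < p := by linarith
  have hr₁ : 1 ≤ 2 / p := by rw [le_div_iff₀ hp]; linarith
  have hr₂ : 2 / p ≤ 2 := by rw [div_le_iff₀ hp]; linarith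
  have hroot {c : ℝ} (hc : 0 ≤ c) : (c ^ (p / 2)) ^ (2 / p) = c := by
    rw [show 2 / p = (p / 2)⁻¹ from (inv_div p 2).symm]
    exact Real.rpow_rpow_inv hc (by positivity)
  have hderiv : (b ^ (p / 2)) ^ (2 / p - 1) = b ^ (1 - p / 2) := by
    rw [← Real.rpow_mul hb]; congr 1; field_simp
  have hx := Real.rpow_nonneg ha (p / 2)
  have hy := Real.rpow_nonneg hb (p / 2)
  have hlow := rpow_tangent_le_rpow hr₁ hx hy
  have hup := rpow_sub_tangent_le_abs_sub_rpow hr₁ hr₂ hx hy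
  rw [hroot ha, hroot hb, hderiv] at hlow hup
  exact ⟨by linarith, hup⟩
end

section
/- Let 1 < p ≤ 2 and define F_p(x) = (x^2 - 1 + p - p x^{2/p}) / (1 - x)^2 for x ≥ 0, x ≠ 1, extended continuously at x = 1 by F_p(1) = 2(p-1)/p. Then F_p is monotone nondecreasing on [0,∞), F_p(0) = p - 1, and F_p(x) → 1 as x → ∞. -/
/-!
Write `q = 2 / p ∈ [1, 2)` and `N(x) = x² - 1 + p - p x^q`, so `F = N / (1 - x)²` away from `1`.
There `F' = 2 g / (1 - x)³` with `g(x) = x - x^(q-1) + (1 - p) x^q + (p - 1)`; weighted AM-GM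
gives `g' ≤ 0`, and `g(1) = 0`, so `F' ≥ 0` on `[0, 1)` and on `(1, ∞)`. The comparison with
`F(1) = 2 - q` is the sign of `N(x) - (2 - q)(1 - x)²`, which vanishes at `1` and is nondecreasing,
again by weighted AM-GM. At infinity `N(x) ~ x² ~ (1 - x)²`.
-/

open Real Set Filter Topology

theorem monotoneOn_of_monotoneOn_Iio_Ioi {α β : Type*} [LinearOrder α] [Preorder β]
    {f : α → β} {s : Set α} {c : α} (hlt : MonotoneOn f (s ∩ Iio c))
    (hgt : MonotoneOn f (s ∩ Ioi c)) (hle : ∀ x ∈ s, x < c → f x ≤ f c)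
    (hge : ∀ x ∈ s, c < x → f c ≤ f x) : MonotoneOn f s := by
  intro a ha b hb hab
  rcases lt_trichotomy a c with hac | rfl | hca
  · rcases lt_trichotomy b c with hbc | rfl | hcb
    · exact hlt ⟨ha, hac⟩ ⟨hb, hbc⟩ hab
    · exact hle a ha hac
    · exact (hle a ha hac).trans (hge b hb hcb)
  · rcases hab.eq_or_lt with rfl | hab
    · exact le_rfl
    · exact hge b hb hab
  · exact hgt ⟨ha, hca⟩ ⟨hb, hca.trans_le hab⟩ hab

theorem rpow_le_mul_add_one_sub {w x : ℝ} (hw0 : 0 ≤ w) (hw1 : w ≤ 1) (hx : 0 ≤ x) :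
    x ^ w ≤ w * x + (1 - w) := by
  simpa using geom_mean_le_arith_mean2_weighted hw0 (sub_nonneg.2 hw1) hx zero_le_one
    (add_sub_cancel w 1)

theorem one_le_mul_rpow_sub_one_add {w x : ℝ} (hw0 : 0 ≤ w) (hw1 : w ≤ 1) (hx : 0 < x) :
    1 ≤ w * x ^ (w - 1) + (1 - w) * x ^ w := by
  have h := geom_mean_le_arith_mean2_weighted hw0 (sub_nonneg.2 hw1)
    (rpow_nonneg hx.le (w - 1)) (rpow_nonneg hx.le w) (add_sub_cancel w 1)
  rwa [← rpow_mul hx.le, ← rpow_mul hx.le, ← rpow_add hx,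
    show (w - 1) * w + w * (1 - w) = 0 by ring, rpow_zero] at h

namespace Fp

variable {p q x : ℝ}

noncomputable def num (p q x : ℝ) : ℝ := x ^ 2 - 1 + p - p * x ^ q

/-- `F p (2 / p)` is the function of the theorem, since `2 - 2 / p = 2 (p - 1) / p`. -/
noncomputable def F (p q x : ℝ) : ℝ := if x = 1 then 2 - q else num p q x / (1 - x) ^ 2

noncomputable def derivFactor (p q x : ℝ) : ℝ := x - x ^ (q - 1) + (1 - p) * x ^ q + (p - 1)

theorem F_of_ne_one (hx : x ≠ 1) : F p q x = num p q x / (1 - x) ^ 2 := if_neg hx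

theorem F_one : F p q 1 = 2 - q := if_pos rfl

theorem hasDerivAt_num (hq : 1 ≤ q) (x : ℝ) :
    HasDerivAt (num p q) (2 * x - p * (q * x ^ (q - 1))) x := by
  have h := (((hasDerivAt_pow 2 x).sub_const 1).add_const p).sub
    ((hasDerivAt_rpow_const (Or.inr hq)).const_mul p)
  exact h.congr_deriv (by push_cast; ring)

theorem hasDerivAt_derivFactor (hpq : p * q = 2) (hx : x ≠ 0) :
    HasDerivAt (derivFactor p q)
      (1 - ((q - 1) * x ^ (q - 1 - 1) + (2 - q) * x ^ (q - 1))) x := by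
  have h := (((hasDerivAt_id x).sub (hasDerivAt_rpow_const (p := q - 1) (Or.inl hx))).add
    ((hasDerivAt_rpow_const (p := q) (Or.inl hx)).const_mul (1 - p))).add_const (p - 1)
  exact h.congr_deriv (by linear_combination (-x ^ (q - 1)) * hpq)

theorem derivFactor_one : derivFactor p q 1 = 0 := by simp [derivFactor]

theorem antitoneOn_derivFactor (hq1 : 1 ≤ q) (hq2 : q ≤ 2) (hpq : p * q = 2) :
    AntitoneOn (derivFactor p q) (Ioi 0) := by
  refine antitoneOn_of_hasDerivWithinAt_nonpos (convex_Ioi 0)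
    (fun x hx => (hasDerivAt_derivFactor hpq (ne_of_gt hx)).continuousAt.continuousWithinAt)
    (fun x hx => (hasDerivAt_derivFactor hpq (ne_of_gt (interior_subset hx))).hasDerivWithinAt)
    fun x hx => ?_
  have h := one_le_mul_rpow_sub_one_add (sub_nonneg.2 hq1) (by linarith) (interior_subset hx)
  rw [show 1 - (q - 1) = 2 - q by ring] at h
  linarith

theorem derivFactor_nonneg (hq1 : 1 ≤ q) (hq2 : q ≤ 2) (hpq : p * q = 2) (hx0 : 0 < x)
    (hx1 : x ≤ 1) : 0 ≤ derivFactor p q x :=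
  derivFactor_one (p := p) (q := q) ▸
    antitoneOn_derivFactor hq1 hq2 hpq hx0 (mem_Ioi.2 one_pos) hx1

theorem derivFactor_nonpos (hq1 : 1 ≤ q) (hq2 : q ≤ 2) (hpq : p * q = 2) (hx1 : 1 ≤ x) :
    derivFactor p q x ≤ 0 :=
  derivFactor_one (p := p) (q := q) ▸
    antitoneOn_derivFactor hq1 hq2 hpq (mem_Ioi.2 one_pos) (mem_Ioi.2 (by linarith)) hx1

theorem monotoneOn_num_sub (hq1 : 1 ≤ q) (hq2 : q ≤ 2) (hpq : p * q = 2) :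
    MonotoneOn (fun x => num p q x - (2 - q) * (1 - x) ^ 2) (Ici 0) := by
  have hderiv (x : ℝ) : HasDerivAt (fun x => num p q x - (2 - q) * (1 - x) ^ 2)
      (2 * ((q - 1) * x + (1 - (q - 1)) - x ^ (q - 1))) x := by
    have h := (hasDerivAt_num (p := p) hq1 x).sub
      ((((hasDerivAt_id x).const_sub 1).pow 2).const_mul (2 - q))
    exact h.congr_deriv (by simp only [id]; push_cast; linear_combination (-x ^ (q - 1)) * hpq)
  refine monotoneOn_of_hasDerivWithinAt_nonneg (convex_Ici 0)
    (fun x _ => (hderiv x).continuousAt.continuousWithinAt)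
    (fun x _ => (hderiv x).hasDerivWithinAt) fun x hx => ?_
  have h := rpow_le_mul_add_one_sub (sub_nonneg.2 hq1) (by linarith) (interior_subset hx)
  linarith

theorem num_le_of_le_one (hq1 : 1 ≤ q) (hq2 : q ≤ 2) (hpq : p * q = 2) (hx0 : 0 ≤ x)
    (hx1 : x ≤ 1) : num p q x ≤ (2 - q) * (1 - x) ^ 2 := by
  have h := monotoneOn_num_sub hq1 hq2 hpq hx0 (mem_Ici.2 zero_le_one) hx1
  simp only [num, one_rpow] at h ⊢
  linarith

theorem le_num_of_one_le (hq1 : 1 ≤ q) (hq2 : q ≤ 2) (hpq : p * q = 2) (hx1 : 1 ≤ x) :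
    (2 - q) * (1 - x) ^ 2 ≤ num p q x := by
  have h := monotoneOn_num_sub hq1 hq2 hpq (mem_Ici.2 zero_le_one) (mem_Ici.2 (by linarith)) hx1
  simp only [num, one_rpow] at h ⊢
  linarith

theorem F_le_F_one (hq1 : 1 ≤ q) (hq2 : q ≤ 2) (hpq : p * q = 2) (hx0 : 0 ≤ x)
    (hx1 : x < 1) : F p q x ≤ F p q 1 := by
  rw [F_of_ne_one hx1.ne, F_one, div_le_iff₀ (by nlinarith)]
  exact num_le_of_le_one hq1 hq2 hpq hx0 hx1.le

theorem F_one_le_F (hq1 : 1 ≤ q) (hq2 : q ≤ 2) (hpq : p * q = 2) (hx1 : 1 < x) :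
    F p q 1 ≤ F p q x := by
  rw [F_of_ne_one hx1.ne', F_one, le_div_iff₀ (by nlinarith)]
  exact le_num_of_one_le hq1 hq2 hpq hx1.le

theorem hasDerivAt_num_div (hq1 : 1 ≤ q) (hpq : p * q = 2) (hx0 : 0 < x) (hx1 : x ≠ 1) :
    HasDerivAt (fun x => num p q x / (1 - x) ^ 2) (2 * derivFactor p q x / (1 - x) ^ 3) x := by
  have h1x : 1 - x ≠ 0 := sub_ne_zero.2 hx1.symm
  have h := (hasDerivAt_num (p := p) hq1 x).div (((hasDerivAt_id x).const_sub 1).pow 2)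
    (pow_ne_zero 2 h1x)
  refine h.congr_deriv ?_
  have hxq : x ^ q = x ^ (q - 1) * x := by
    rw [← rpow_add_one hx0.ne', sub_add_cancel]
  simp only [num, derivFactor, hxq, id, Pi.pow_apply]
  field_simp
  push_cast
  linear_combination (-(x ^ (q - 1) * (1 - x) ^ 2)) * hpq

theorem continuous_num (hq : 1 ≤ q) : Continuous (num p q) :=
  continuous_iff_continuousAt.2 fun x => (hasDerivAt_num hq x).continuousAt

theorem monotoneOn_num_div_Ico (hq1 : 1 ≤ q) (hq2 : q ≤ 2) (hpq : p * q = 2) :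
    MonotoneOn (fun x => num p q x / (1 - x) ^ 2) (Ico 0 1) := by
  have hcont : ContinuousOn (fun x => num p q x / (1 - x) ^ 2) (Ico 0 1) :=
    (continuous_num hq1).continuousOn.div (by fun_prop)
      fun x hx => pow_ne_zero 2 (sub_ne_zero.2 hx.2.ne')
  refine monotoneOn_of_hasDerivWithinAt_nonneg
    (f' := fun x => 2 * derivFactor p q x / (1 - x) ^ 3) (convex_Ico 0 1) hcont ?_ ?_ <;>
    rw [interior_Ico]
  · exact fun x hx => (hasDerivAt_num_div hq1 hpq hx.1 hx.2.ne).hasDerivWithinAt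
  · intro x hx
    have hg := derivFactor_nonneg hq1 hq2 hpq hx.1 hx.2.le
    exact div_nonneg (mul_nonneg zero_le_two hg) (pow_nonneg (by linarith [hx.2]) 3)

theorem monotoneOn_num_div_Ioi (hq1 : 1 ≤ q) (hq2 : q ≤ 2) (hpq : p * q = 2) :
    MonotoneOn (fun x => num p q x / (1 - x) ^ 2) (Ioi 1) := by
  have hderiv (x : ℝ) (hx : 1 < x) := hasDerivAt_num_div hq1 hpq (by linarith) hx.ne'
  refine monotoneOn_of_hasDerivWithinAt_nonneg
    (f' := fun x => 2 * derivFactor p q x / (1 - x) ^ 3) (convex_Ioi 1)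
    (fun x hx => (hderiv x hx).continuousAt.continuousWithinAt) ?_ ?_ <;> rw [interior_Ioi]
  · exact fun x hx => (hderiv x hx).hasDerivWithinAt
  · intro x hx
    have hg := derivFactor_nonpos hq1 hq2 hpq (le_of_lt hx)
    exact div_nonneg_of_nonpos (by linarith)
      (Odd.pow_nonpos (by decide) (by linarith [mem_Ioi.1 hx]))

theorem monotoneOn_F (hq1 : 1 ≤ q) (hq2 : q ≤ 2) (hpq : p * q = 2) :
    MonotoneOn (F p q) (Ici 0) := by
  refine monotoneOn_of_monotoneOn_Iio_Ioi (c := 1) ?_ ?_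
    (fun x hx hx1 => F_le_F_one hq1 hq2 hpq hx hx1) fun x _ hx1 => F_one_le_F hq1 hq2 hpq hx1
  · exact (monotoneOn_num_div_Ico hq1 hq2 hpq).congr
      (fun x hx => (F_of_ne_one hx.2.ne).symm) |>.mono fun x hx => ⟨hx.1, hx.2⟩
  · exact (monotoneOn_num_div_Ioi hq1 hq2 hpq).congr
      (fun x hx => (F_of_ne_one (ne_of_gt hx)).symm) |>.mono inter_subset_right

theorem F_zero (hq : q ≠ 0) : F p q 0 = p - 1 := by
  rw [F_of_ne_one zero_ne_one, num, zero_rpow hq]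
  ring

theorem tendsto_num_div_sq_atTop (hq2 : q < 2) :
    Tendsto (fun x => num p q x / x ^ 2) atTop (𝓝 1) := by
  have hrpow : Tendsto (fun x : ℝ => x ^ (q - 2)) atTop (𝓝 0) := by
    simpa using tendsto_rpow_neg_atTop (y := 2 - q) (by linarith)
  have hlim :
      Tendsto (fun x : ℝ => 1 + (p - 1) * x⁻¹ ^ 2 - p * x ^ (q - 2)) atTop (𝓝 1) := by
    simpa using (tendsto_const_nhds.add
      ((tendsto_inv_atTop_zero.pow 2).const_mul (p - 1))).sub (hrpow.const_mul p)
  refine hlim.congr' ?_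
  filter_upwards [eventually_gt_atTop 0] with x hx
  rw [num, rpow_sub hx, rpow_two]
  field_simp
  ring

theorem tendsto_one_sub_sq_div_sq_atTop :
    Tendsto (fun x : ℝ => (1 - x) ^ 2 / x ^ 2) atTop (𝓝 1) := by
  have hlim : Tendsto (fun x : ℝ => (x⁻¹ - 1) ^ 2) atTop (𝓝 1) := by
    simpa using ((tendsto_inv_atTop_zero (𝕜 := ℝ)).sub_const 1).pow 2
  refine hlim.congr' ?_
  filter_upwards [eventually_gt_atTop 0] with x hx
  field_simp

theorem tendsto_F_atTop (hq2 : q < 2) : Tendsto (F p q) atTop (𝓝 1) := by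
  have hlim := (tendsto_num_div_sq_atTop (p := p) hq2).div tendsto_one_sub_sq_div_sq_atTop
    one_ne_zero
  rw [div_one] at hlim
  refine hlim.congr' ?_
  filter_upwards [eventually_gt_atTop 1] with x hx
  rw [F_of_ne_one hx.ne', Pi.div_apply, div_div_div_cancel_right₀ (by positivity)]

end Fp

theorem Fp_monotone_limits (p : ℝ) (hp1 : 1 < p) (hp2 : p ≤ 2) :
    MonotoneOn
        (fun x : ℝ => if x = 1 then 2 * (p - 1) / p
          else (x ^ 2 - 1 + p - p * x ^ (2 / p)) / (1 - x) ^ 2)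
        (Set.Ici (0 : ℝ)) ∧
      (fun x : ℝ => if x = 1 then 2 * (p - 1) / p
          else (x ^ 2 - 1 + p - p * x ^ (2 / p)) / (1 - x) ^ 2) 0 = p - 1 ∧
      Filter.Tendsto
        (fun x : ℝ => if x = 1 then 2 * (p - 1) / p
          else (x ^ 2 - 1 + p - p * x ^ (2 / p)) / (1 - x) ^ 2)
        Filter.atTop (nhds 1) := by
  have hp0 : 0 < p := by linarith
  have hq1 : 1 ≤ 2 / p := (one_le_div hp0).2 hp2
  have hq2 : 2 / p < 2 := (div_lt_iff₀ hp0).2 (by linarith)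
  have hpq : p * (2 / p) = 2 := mul_div_cancel₀ 2 hp0.ne'
  have hF : (fun x : ℝ => if x = 1 then 2 * (p - 1) / p
      else (x ^ 2 - 1 + p - p * x ^ (2 / p)) / (1 - x) ^ 2) = Fp.F p (2 / p) := by
    have h1 : 2 * (p - 1) / p = 2 - 2 / p := by field_simp
    rw [h1]
    rfl
  rw [hF]
  exact ⟨Fp.monotoneOn_F hq1 hq2.le hpq, Fp.F_zero (by positivity), Fp.tendsto_F_atTop hq2⟩
end

section
/- Let 1 < p ≤ 2 and a, b ≥ 0. Then a^p + (p-1) b^p - p b^{p-1} a ≥ (p-1)(a^{p/2} - b^{p/2})^2. -/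
/-!
Writing `x = a^{p/2}` and `y = b^{p/2}`, the claim reduces to
`p · a b^{p-1} ≤ (2 - p) x² + 2(p - 1) x y`, which is the weighted AM–GM inequality
for `x²` and `x y` with weights `(2 - p)/p` and `2(p - 1)/p`, since
`(x²)^{(2-p)/p} (x y)^{2(p-1)/p} = a^{2-p} a^{p-1} b^{p-1} = a b^{p-1}`.
-/

open Real

lemma Real.rpow_div_two_sq {a : ℝ} (ha : 0 ≤ a) (p : ℝ) : (a ^ (p / 2)) ^ 2 = a ^ p := by
  rw [← rpow_mul_natCast ha]
  norm_num

lemma mul_mul_rpow_sub_one_le {p a b : ℝ} (hp1 : 1 ≤ p) (hp2 : p ≤ 2) (ha : 0 ≤ a)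
    (hb : 0 ≤ b) :
    p * (a * b ^ (p - 1)) ≤ (2 - p) * a ^ p + 2 * (p - 1) * (a ^ (p / 2) * b ^ (p / 2)) := by
  have hp : 0 < p := by linarith
  have hsum : (2 - p) / p + 2 * (p - 1) / p = 1 := by field_simp; ring
  have amgm := geom_mean_le_arith_mean2_weighted (div_nonneg (by linarith) hp.le)
    (div_nonneg (by linarith) hp.le) (rpow_nonneg ha p)
    (mul_nonneg (rpow_nonneg ha (p / 2)) (rpow_nonneg hb (p / 2))) hsum
  have hexp : p * ((2 - p) / p) + p / 2 * (2 * (p - 1) / p) = 1 := by field_simp; ring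
  have geom : (a ^ p) ^ ((2 - p) / p) * (a ^ (p / 2) * b ^ (p / 2)) ^ (2 * (p - 1) / p)
      = a * b ^ (p - 1) := by
    rw [mul_rpow (rpow_nonneg ha _) (rpow_nonneg hb _), ← rpow_mul ha, ← rpow_mul ha,
      ← rpow_mul hb, ← mul_assoc, ← rpow_add' ha (by rw [hexp]; exact one_ne_zero), hexp,
      rpow_one]
    congr 2
    field_simp
  rw [geom] at amgm
  calc p * (a * b ^ (p - 1))
      ≤ p * ((2 - p) / p * a ^ p + 2 * (p - 1) / p * (a ^ (p / 2) * b ^ (p / 2))) := by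
        gcongr
    _ = (2 - p) * a ^ p + 2 * (p - 1) * (a ^ (p / 2) * b ^ (p / 2)) := by field_simp

theorem pointwise_convexity_bound (p : ℝ) (hp1 : 1 < p) (hp2 : p ≤ 2)
    (a b : ℝ) (ha : 0 ≤ a) (hb : 0 ≤ b) :
    (p - 1) * (a ^ (p / 2) - b ^ (p / 2)) ^ 2 ≤
      a ^ p + (p - 1) * b ^ p - p * b ^ (p - 1) * a := by
  have amgm := mul_mul_rpow_sub_one_le hp1.le hp2 ha hb
  rw [← rpow_div_two_sq ha p, ← rpow_div_two_sq hb p] at *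
  linear_combination amgm
end
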